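/- arXiv:2401.08928 — 7 statements merged into one kernel-verified Lean document; each statement's English description precedes it below -/
import Mathlib

section
/- Let d ≥ 2 be an integer, λ > 0, and φ, ψ ∈ [0, π/2]. Set Λ = (4/(d+1))·(b_{d−1}/b_d)·λ. Then K_λ^d(φ, ψ) = (d+1)/4 · (1 + κ_Λ(φ + ψ)) − λ. -/
open MeasureTheory Real Set

noncomputable section

/-- `b d` is the volume of the unit ball in `ℝ^d`. -/
def ballVol (d : ℕ) : ℝ := Real.pi ^ ((d : ℝ) / 2) / Real.Gamma ((d : ℝ) / 2 + 1)

/-- `K_λ^d(φ,ψ)`: the infimum of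
`(d+1)/4 · |v₁+v₂|²/2 + λ((b_{d−1}/b_d)|n₁−n₂| − 1)` over unit vectors with
`⟨v₁,n₁⟩ = cos φ` and `⟨v₂,n₂⟩ = cos ψ`. -/
def Kfun (d : ℕ) (lam φ ψ : ℝ) : ℝ :=
  sInf {r : ℝ | ∃ v₁ n₁ v₂ n₂ : EuclideanSpace ℝ (Fin d),
    ‖v₁‖ = 1 ∧ ‖n₁‖ = 1 ∧ ‖v₂‖ = 1 ∧ ‖n₂‖ = 1 ∧
    (inner ℝ v₁ n₁ : ℝ) = Real.cos φ ∧ (inner ℝ v₂ n₂ : ℝ) = Real.cos ψ ∧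
    r = ((d : ℝ) + 1) / 4 * (‖v₁ + v₂‖ ^ 2 / 2) +
        lam * (ballVol (d - 1) / ballVol d * ‖n₁ - n₂‖ - 1)}

/-- `κ_Λ(θ) = inf_{η ∈ [0,(π−θ)/2]} (cos(θ+2η) + 2Λ sin η)`. -/
def kappaFun (Λ θ : ℝ) : ℝ :=
  sInf ((fun η => Real.cos (θ + 2 * η) + 2 * Λ * Real.sin η) ''
    Set.Icc 0 ((Real.pi - θ) / 2))

end

/-! Write `γ = ∠(v₁, v₂)` and `α = ∠(n₁, n₂)`. Since `‖v₁ + v₂‖² / 2 = 1 + cos γ` and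
`‖n₁ - n₂‖ = 2 sin (α / 2)`, the objective is `(d+1)/4 · (1 + cos γ + 2Λ sin η) - λ` with
`η = α / 2`. The triangle inequality for angles through `n₁` and `n₂` gives `γ ≤ φ + ψ + 2η`, so
`cos γ ≥ cos (φ + ψ + 2η)` while `φ + ψ + 2η ≤ π`; beyond that `cos γ ≥ -1 = cos π` and `sin η`
only grows, so the endpoint `η = (π - φ - ψ)/2` does at least as well. Equality is attained by
coplanar unit vectors at angles `0, φ, φ + 2η, φ + ψ + 2η`, with `η` a minimiser of
`f_{φ+ψ,Λ}`. -/

open InnerProductGeometry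
open scoped RealInnerProductSpace

lemma ballVol_pos (n : ℕ) : 0 < ballVol n :=
  div_pos (rpow_pos_of_pos pi_pos _) (Gamma_pos_of_pos (by positivity))

section KappaFun

variable {Λ θ : ℝ}

lemma isLeast_kappaFun (hθ : θ ≤ π) :
    IsLeast ((fun η => cos (θ + 2 * η) + 2 * Λ * sin η) '' Icc 0 ((π - θ) / 2))
      (kappaFun Λ θ) :=
  (isCompact_Icc.image (by fun_prop)).isLeast_sInf
    ((nonempty_Icc.2 (by linarith)).image _)

lemma kappaFun_le_cos_add {γ η : ℝ} (hΛ : 0 ≤ Λ) (hθ : θ ≤ π) (hγ : 0 ≤ γ)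
    (hη₀ : 0 ≤ η) (hη₁ : η ≤ π / 2) (hγη : γ ≤ θ + 2 * η) :
    kappaFun Λ θ ≤ cos γ + 2 * Λ * sin η := by
  have hκ := (isLeast_kappaFun (Λ := Λ) hθ).2
  rcases le_or_gt η ((π - θ) / 2) with hη | hη
  · have hcos : cos (θ + 2 * η) ≤ cos γ :=
      cos_le_cos_of_nonneg_of_le_pi hγ (by linarith) hγη
    linarith [hκ ⟨η, ⟨hη₀, hη⟩, rfl⟩]
  · have hsin : sin ((π - θ) / 2) ≤ sin η :=
      strictMonoOn_sin.monotoneOn ⟨by linarith, by linarith⟩ ⟨by linarith, hη₁⟩ hη.le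
    have hend : kappaFun Λ θ ≤ cos (θ + 2 * ((π - θ) / 2)) + 2 * Λ * sin ((π - θ) / 2) :=
      hκ ⟨(π - θ) / 2, ⟨by linarith, le_rfl⟩, rfl⟩
    rw [show θ + 2 * ((π - θ) / 2) = π by ring, cos_pi] at hend
    nlinarith [neg_one_le_cos γ]

end KappaFun

section UnitVectors

variable {E : Type*} [NormedAddCommGroup E] [InnerProductSpace ℝ E]

lemma angle_eq_of_inner_eq_cos {x y : E} {φ : ℝ} (hx : ‖x‖ = 1) (hy : ‖y‖ = 1)
    (h : ⟪x, y⟫ = cos φ) (hφ₀ : 0 ≤ φ) (hφ₁ : φ ≤ π) : angle x y = φ := by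
  rw [angle, h, hx, hy, mul_one, div_one, arccos_cos hφ₀ hφ₁]

lemma norm_sub_eq_two_mul_sin {x y : E} {η : ℝ} (hx : ‖x‖ = 1) (hy : ‖y‖ = 1)
    (h : ⟪x, y⟫ = cos (2 * η)) (hη : 0 ≤ sin η) : ‖x - y‖ = 2 * sin η := by
  have hsq : ‖x - y‖ ^ 2 = (2 * sin η) ^ 2 := by
    rw [norm_sub_sq_real, hx, hy, h, cos_two_mul, cos_sq']
    ring
  exact (pow_left_inj₀ (norm_nonneg _) (by positivity) two_ne_zero).1 hsq

noncomputable def circlePoint (u w : E) (a : ℝ) : E := cos a • u + sin a • w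

variable {u w : E}

lemma inner_circlePoint (hu : ‖u‖ = 1) (hw : ‖w‖ = 1) (huw : ⟪u, w⟫ = 0) (a b : ℝ) :
    ⟪circlePoint u w a, circlePoint u w b⟫ = cos (a - b) := by
  have hwu : ⟪w, u⟫ = 0 := by rw [real_inner_comm, huw]
  simp only [circlePoint, inner_add_left, inner_add_right, real_inner_smul_left,
    real_inner_smul_right, real_inner_self_eq_norm_sq, hu, hw, huw, hwu, cos_sub]
  ring

lemma norm_circlePoint (hu : ‖u‖ = 1) (hw : ‖w‖ = 1) (huw : ⟪u, w⟫ = 0) (a : ℝ) :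
    ‖circlePoint u w a‖ = 1 := by
  have h := inner_circlePoint hu hw huw a a
  rwa [sub_self, cos_zero, real_inner_self_eq_norm_sq,
    pow_eq_one_iff_of_nonneg (norm_nonneg _) two_ne_zero] at h

variable {v₁ n₁ v₂ n₂ : E} {φ ψ : ℝ}

lemma kappaFun_le_inner_add_mul_norm_sub {Λ : ℝ} (hφ : 0 ≤ φ) (hψ : 0 ≤ ψ) (hθ : φ + ψ ≤ π)
    (hΛ : 0 ≤ Λ) (hv₁ : ‖v₁‖ = 1) (hn₁ : ‖n₁‖ = 1) (hv₂ : ‖v₂‖ = 1) (hn₂ : ‖n₂‖ = 1)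
    (h₁ : ⟪v₁, n₁⟫ = cos φ) (h₂ : ⟪v₂, n₂⟫ = cos ψ) :
    kappaFun Λ (φ + ψ) ≤ ⟪v₁, v₂⟫ + Λ * ‖n₁ - n₂‖ := by
  have hangle₁ : angle v₁ n₁ = φ := angle_eq_of_inner_eq_cos hv₁ hn₁ h₁ hφ (by linarith)
  have hangle₂ : angle v₂ n₂ = ψ := angle_eq_of_inner_eq_cos hv₂ hn₂ h₂ hψ (by linarith)
  have hγ : angle v₁ v₂ ≤ φ + ψ + 2 * (angle n₁ n₂ / 2) :=
    calc angle v₁ v₂ ≤ angle v₁ n₁ + angle n₁ v₂ := angle_le_angle_add_angle _ _ _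
      _ ≤ angle v₁ n₁ + (angle n₁ n₂ + angle n₂ v₂) := by
        gcongr; exact angle_le_angle_add_angle _ _ _
      _ = φ + ψ + 2 * (angle n₁ n₂ / 2) := by rw [hangle₁, angle_comm n₂ v₂, hangle₂]; ring
  have hα₀ := angle_nonneg n₁ n₂
  have hα₁ := angle_le_pi n₁ n₂
  have hn : ‖n₁ - n₂‖ = 2 * sin (angle n₁ n₂ / 2) :=
    norm_sub_eq_two_mul_sin hn₁ hn₂
      (by rw [mul_div_cancel₀ _ two_ne_zero, inner_eq_cos_angle_of_norm_eq_one hn₁ hn₂])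
      (sin_nonneg_of_nonneg_of_le_pi (by positivity) (by linarith))
  rw [inner_eq_cos_angle_of_norm_eq_one hv₁ hv₂, hn]
  linarith [kappaFun_le_cos_add hΛ hθ (angle_nonneg v₁ v₂) (by positivity)
    (by linarith) hγ]

lemma exists_inner_add_mul_norm_sub_eq_kappaFun {u w : E} (hu : ‖u‖ = 1) (hw : ‖w‖ = 1)
    (huw : ⟪u, w⟫ = 0) (hθ₀ : 0 ≤ φ + ψ) (hθ : φ + ψ ≤ π) (Λ : ℝ) :
    ∃ v₁ n₁ v₂ n₂ : E, ‖v₁‖ = 1 ∧ ‖n₁‖ = 1 ∧ ‖v₂‖ = 1 ∧ ‖n₂‖ = 1 ∧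
      ⟪v₁, n₁⟫ = cos φ ∧ ⟪v₂, n₂⟫ = cos ψ ∧ ⟪v₁, v₂⟫ + Λ * ‖n₁ - n₂‖ = kappaFun Λ (φ + ψ) := by
  obtain ⟨η, ⟨hη₀, hη₁⟩, hη⟩ := (isLeast_kappaFun (Λ := Λ) hθ).1
  have hp := norm_circlePoint hu hw huw
  have hpp := inner_circlePoint hu hw huw
  refine ⟨circlePoint u w 0, circlePoint u w φ, circlePoint u w (φ + ψ + 2 * η),
    circlePoint u w (φ + 2 * η), hp _, hp _, hp _, hp _, ?_, ?_, ?_⟩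
  · rw [hpp, zero_sub, cos_neg]
  · rw [hpp]; ring_nf
  · have hn : ‖circlePoint u w φ - circlePoint u w (φ + 2 * η)‖ = 2 * sin η :=
      norm_sub_eq_two_mul_sin (hp _) (hp _) (by rw [hpp, sub_add_cancel_left, cos_neg])
        (sin_nonneg_of_nonneg_of_le_pi hη₀ (by linarith))
    rw [hpp, zero_sub, cos_neg, hn, ← hη]
    ring

end UnitVectors

theorem stmt2 (d : ℕ) (hd : 2 ≤ d) (lam : ℝ) (hlam : 0 < lam)
    (φ ψ : ℝ) (hφ : φ ∈ Set.Icc 0 (Real.pi / 2)) (hψ : ψ ∈ Set.Icc 0 (Real.pi / 2))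
    (Λ : ℝ) (hΛ : Λ = 4 / ((d : ℝ) + 1) * (ballVol (d - 1) / ballVol d) * lam) :
    Kfun d lam φ ψ = ((d : ℝ) + 1) / 4 * (1 + kappaFun Λ (φ + ψ)) - lam := by
  obtain ⟨hφ₀, hφ₁⟩ := hφ
  obtain ⟨hψ₀, hψ₁⟩ := hψ
  have hΛ₀ : 0 ≤ Λ := by
    have := ballVol_pos d
    have := ballVol_pos (d - 1)
    rw [hΛ]; positivity
  have hvalue (v₁ n₁ v₂ n₂ : EuclideanSpace ℝ (Fin d)) (hv₁ : ‖v₁‖ = 1) (hv₂ : ‖v₂‖ = 1) :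
      ((d : ℝ) + 1) / 4 * (‖v₁ + v₂‖ ^ 2 / 2) + lam * (ballVol (d - 1) / ballVol d * ‖n₁ - n₂‖ - 1)
        = ((d : ℝ) + 1) / 4 * (1 + (⟪v₁, v₂⟫ + Λ * ‖n₁ - n₂‖)) - lam := by
    rw [norm_add_sq_real, hv₁, hv₂, hΛ]
    field_simp
    ring
  have hON := (EuclideanSpace.basisFun (Fin d) ℝ).orthonormal
  have h01 : (⟨0, by omega⟩ : Fin d) ≠ ⟨1, by omega⟩ := by simp
  obtain ⟨v₁, n₁, v₂, n₂, hv₁, hn₁, hv₂, hn₂, h₁, h₂, hmin⟩ :=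
    exists_inner_add_mul_norm_sub_eq_kappaFun (φ := φ) (ψ := ψ) (hON.1 _) (hON.1 _) (hON.2 h01)
      (by linarith) (by linarith) Λ
  refine IsLeast.csInf_eq ⟨⟨v₁, n₁, v₂, n₂, hv₁, hn₁, hv₂, hn₂, h₁, h₂, ?_⟩, ?_⟩
  · rw [hvalue _ _ _ _ hv₁ hv₂, hmin]
  rintro r ⟨v₁, n₁, v₂, n₂, hv₁, hn₁, hv₂, hn₂, h₁, h₂, rfl⟩
  rw [hvalue _ _ _ _ hv₁ hv₂]
  gcongr
  exact kappaFun_le_inner_add_mul_norm_sub hφ₀ hψ₀ (by linarith) hΛ₀ hv₁ hn₁ hv₂ hn₂ h₁ h₂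
end

section
/- Let 0 < Λ ≤ 1 and 0 < θ ≤ π − arcsin Λ. Then there is exactly one η in the interval [max(0, π/2 − θ), (π − θ)/2] satisfying Λ cos η = sin(θ + 2η). -/
open Real Set

lemma key_id (θ s d : ℝ) :
    sin (θ + 2*(s+d)) * cos (s-d) - sin (θ + 2*(s-d)) * cos (s+d)
      = cos (θ+3*s) * sin d + cos (θ+s) * sin (3*d) := by
  have pa : ∀ A B : ℝ, sin A * cos B = (sin (A+B) + sin (A-B))/2 := fun A B => by
    rw [sin_add, sin_sub]; ring
  have l1 := pa (θ+2*(s+d)) (s-d)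
  rw [show (θ+2*(s+d))+(s-d) = θ+3*s+d by ring,
      show (θ+2*(s+d))-(s-d) = θ+s+3*d by ring] at l1
  have l2 := pa (θ+2*(s-d)) (s+d)
  rw [show (θ+2*(s-d))+(s+d) = θ+3*s-d by ring,
      show (θ+2*(s-d))-(s+d) = θ+s-3*d by ring] at l2
  have e1 := Real.sin_sub_sin (θ+3*s+d) (θ+3*s-d)
  have e2 := Real.sin_sub_sin (θ+s+3*d) (θ+s-3*d)
  rw [show ((θ+3*s+d)-(θ+3*s-d))/2 = d by ring,
      show ((θ+3*s+d)+(θ+3*s-d))/2 = θ+3*s by ring] at e1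
  rw [show ((θ+s+3*d)-(θ+s-3*d))/2 = 3*d by ring,
      show ((θ+s+3*d)+(θ+s-3*d))/2 = θ+s by ring] at e2
  rw [l1, l2]; linarith

theorem stmt5 (Λ θ : ℝ) (hΛ0 : 0 < Λ) (hΛ1 : Λ ≤ 1)
    (hθ0 : 0 < θ) (hθ : θ ≤ Real.pi - Real.arcsin Λ) :
    ∃! η, η ∈ Set.Icc (max 0 (Real.pi / 2 - θ)) ((Real.pi - θ) / 2) ∧
      Λ * Real.cos η = Real.sin (θ + 2 * η) := by
  set a := max 0 (π/2 - θ) with ha_def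
  set b := (π - θ)/2 with hb_def
  have harc0 : 0 < arcsin Λ := Real.arcsin_pos.mpr hΛ0
  have harc2 : arcsin Λ ≤ π/2 := Real.arcsin_le_pi_div_two Λ
  have hθπ : θ < π := by linarith
  have ha0 : (0:ℝ) ≤ a := le_max_left _ _
  have ha1 : π/2 - θ ≤ a := le_max_right _ _
  have hab : a ≤ b := max_le (by simp [hb_def]; linarith) (by simp [hb_def]; linarith)
  have hbπ : b < π/2 := by simp [hb_def]; linarith
  -- key strict inequality
  have key : ∀ η₁ η₂ : ℝ, a ≤ η₁ → η₁ < η₂ → η₂ ≤ b →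
      sin (θ + 2*η₂) * cos η₁ < sin (θ + 2*η₁) * cos η₂ := by
    intro η₁ η₂ h1 h12 h2
    set s := (η₁ + η₂)/2 with hs
    set d := (η₂ - η₁)/2 with hd
    have hd0 : 0 < d := by simp [hd]; linarith
    have hη1 : η₁ = s - d := by simp [hs, hd]; ring
    have hη2 : η₂ = s + d := by simp [hs, hd]; ring
    have hsa : a < s := by simp [hs]; linarith
    have hsb : s ≤ b := by simp [hs]; linarith
    have hid := key_id θ s d
    rw [hη1, hη2]
    -- bounds
    have t1 : cos (θ + 3*s) ≤ 0 := by
      apply Real.cos_nonpos_of_pi_div_two_le_of_le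
      · linarith
      · simp [hb_def] at hsb; linarith [Real.pi_pos]
    have t2 : 0 < sin d := by
      apply Real.sin_pos_of_pos_of_lt_pi hd0
      simp [hd] at *; linarith [Real.pi_pos]
    have t3 : cos (θ + s) < 0 := by
      apply Real.cos_neg_of_pi_div_two_lt_of_lt
      · linarith
      · simp [hb_def] at hsb; linarith [Real.pi_pos]
    have t4 : 0 < sin (3*d) := by
      apply Real.sin_pos_of_pos_of_lt_pi (by linarith)
      have : d ≤ b/2 := by simp [hd]; linarith
      linarith [Real.pi_pos]
    nlinarith [mul_nonpos_of_nonpos_of_nonneg t1 t2.le, mul_neg_of_neg_of_pos t3 t4]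
  have hcos : ∀ η : ℝ, η ∈ Icc a b → 0 < cos η := by
    intro η hη
    apply Real.cos_pos_of_mem_Ioo
    constructor
    · linarith [hη.1, Real.pi_pos]
    · linarith [hη.2]
  -- existence via IVT
  have hcont : ContinuousOn (fun η => sin (θ + 2*η) - Λ * cos η) (Icc a b) := by
    fun_prop
  have hfb : sin (θ + 2*b) - Λ * cos b ≤ 0 := by
    have : θ + 2*b = π := by simp [hb_def]; ring
    rw [this, Real.sin_pi]
    have := hcos b ⟨hab, le_refl b⟩
    nlinarith
  have hfa : 0 ≤ sin (θ + 2*a) - Λ * cos a := by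
    rcases le_or_gt (π/2 - θ) 0 with h | h
    · have haz : a = 0 := by simp [ha_def]; linarith
      rw [haz]
      simp only [mul_zero, add_zero, Real.cos_zero, mul_one]
      have hs1 : Λ = sin (arcsin Λ) := (Real.sin_arcsin (by linarith) hΛ1).symm
      have hs2 : sin (arcsin Λ) ≤ sin (π - θ) := by
        apply Real.strictMonoOn_sin.monotoneOn (Real.arcsin_mem_Icc Λ)
          ⟨by linarith, by linarith⟩ (by linarith)
      rw [Real.sin_pi_sub] at hs2
      linarith
    · have haz : a = π/2 - θ := by simp [ha_def]; linarith
      rw [haz, show θ + 2*(π/2 - θ) = π - θ by ring, Real.sin_pi_sub,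
        show π/2 - θ = π/2 - θ from rfl]
      rw [Real.cos_pi_div_two_sub]
      have : 0 < sin θ := Real.sin_pos_of_pos_of_lt_pi hθ0 hθπ
      nlinarith
  obtain ⟨η, hηmem, hηeq⟩ := intermediate_value_Icc' hab hcont ⟨hfb, hfa⟩
  refine ⟨η, ⟨hηmem, by dsimp at hηeq; linarith⟩, ?_⟩
  rintro y ⟨hymem, hyeq⟩
  have hηeq' : Λ * cos η = sin (θ + 2*η) := by dsimp at hηeq; linarith
  by_contra hne
  rcases lt_or_gt_of_ne hne with h | h
  · have := key y η hymem.1 h hηmem.2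
    rw [← hyeq, ← hηeq'] at this
    nlinarith
  · have := key η y hηmem.1 h hymem.2
    rw [← hyeq, ← hηeq'] at this
    nlinarith
end

section
/- Let X ⊂ ℝ be a compact interval, let κ be a continuous strictly concave real function defined on an interval containing {x + y : x, y ∈ X}, and let f₀ be a Borel probability measure with support equal to X. Then every minimizer γ* of γ ↦ ∫_{X×X} κ(x + y) dγ(x, y) over the set Γ_{f₀,f₀} of Borel measures on X × X with both marginals equal to f₀ has support contained in the diagonal {(x, x) : x ∈ X}, and the minimum value equals ∫_X κ(2x) df₀(x). -/
/-!
Strict concavity gives `κ (x + x) + κ (y + y) < 2 κ (x + y)` for `x ≠ y` in the support. Integrated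
against any coupling of `f₀` with itself, the left side only sees the marginals and equals twice the
cost `∫ κ (2x) df₀` of the diagonal coupling `x ↦ (x, x)`. Hence the diagonal coupling is optimal,
and for a minimizer the pointwise inequality must be an equality almost everywhere, which forces
`x = y` almost everywhere.
-/

open MeasureTheory Real Set

theorem StrictConcaveOn.map_add_self_add_lt {I : Set ℝ} {κ : ℝ → ℝ} (hκ : StrictConcaveOn ℝ I κ)
    {x y : ℝ} (hx : x + x ∈ I) (hy : y + y ∈ I) (hxy : x ≠ y) :
    κ (x + x) + κ (y + y) < 2 * κ (x + y) := by
  have h := hκ.2 hx hy (by contrapose! hxy; linarith) (by norm_num : (0 : ℝ) < 1 / 2)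
    (by norm_num : (0 : ℝ) < 1 / 2) (by norm_num)
  have hmid : (1 / 2 : ℝ) • (x + x) + (1 / 2 : ℝ) • (y + y) = x + y := by
    simp only [smul_eq_mul]; ring
  rw [hmid, smul_eq_mul, smul_eq_mul] at h
  linarith

theorem ContinuousOn.integrable_of_ae_mem {X E : Type*} [TopologicalSpace X] [T2Space X]
    [MeasurableSpace X] [OpensMeasurableSpace X] [NormedAddCommGroup E] {μ : Measure X}
    [IsFiniteMeasure μ] {K : Set X} {f : X → E} (hK : IsCompact K) (hf : ContinuousOn f K)
    (hμK : ∀ᵐ x ∂μ, x ∈ K) : Integrable f μ := by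
  have hfK : IntegrableOn f K μ := hf.integrableOn_compact hK
  rwa [IntegrableOn, Measure.restrict_eq_self_of_ae_mem hμK] at hfK

namespace MeasureTheory.Measure

variable {X : Type*} [MeasurableSpace X]

theorem map_fst_map_diag (μ : Measure X) : (μ.map fun x ↦ (x, x)).map Prod.fst = μ := by
  rw [map_map measurable_fst (by fun_prop)]
  exact map_id

theorem map_snd_map_diag (μ : Measure X) : (μ.map fun x ↦ (x, x)).map Prod.snd = μ := by
  rw [map_map measurable_snd (by fun_prop)]
  exact map_id

theorem integral_map_diag {E : Type*} [NormedAddCommGroup E] [NormedSpace ℝ E] {μ : Measure X}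
    {c : X × X → E}
    (hc : AEStronglyMeasurable c (μ.map fun x ↦ (x, x))) :
    ∫ p, c p ∂(μ.map fun x ↦ (x, x)) = ∫ x, c (x, x) ∂μ :=
  integral_map (by fun_prop) hc

variable {μ : Measure X} {γ : Measure (X × X)}

theorem ae_mem_prod_of_map_fst_of_map_snd (hγ₁ : γ.map Prod.fst = μ) (hγ₂ : γ.map Prod.snd = μ)
    {S : Set X} (hS : ∀ᵐ x ∂μ, x ∈ S) : ∀ᵐ p ∂γ, p ∈ S ×ˢ S :=
  (ae_of_ae_map measurable_fst.aemeasurable (hγ₁ ▸ hS)).and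
    (ae_of_ae_map measurable_snd.aemeasurable (hγ₂ ▸ hS))

theorem integrable_of_map_fst_of_map_snd [TopologicalSpace X] [T2Space X]
    [SecondCountableTopology X] [OpensMeasurableSpace X] [IsFiniteMeasure μ]
    (hγ₁ : γ.map Prod.fst = μ) (hγ₂ : γ.map Prod.snd = μ) {K : Set X} (hK : IsCompact K)
    (hμK : ∀ᵐ x ∂μ, x ∈ K) {c : X × X → ℝ} (hc : ContinuousOn c (K ×ˢ K)) : Integrable c γ :=
  have : IsFiniteMeasure (γ.map Prod.fst) := hγ₁ ▸ inferInstance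
  have := isFiniteMeasure_of_map measurable_fst.aemeasurable (μ := γ)
  hc.integrable_of_ae_mem (hK.prod hK) (ae_mem_prod_of_map_fst_of_map_snd hγ₁ hγ₂ hμK)

theorem ae_fst_eq_snd_of_integral_le_integral_diag {S : Set X} (hμS : ∀ᵐ x ∂μ, x ∈ S)
    {c : X × X → ℝ} (hc : ∀ x ∈ S, ∀ y ∈ S, x ≠ y → c (x, x) + c (y, y) < 2 * c (x, y))
    (hc_diag : Integrable (fun x ↦ c (x, x)) μ) (hγ₁ : γ.map Prod.fst = μ)
    (hγ₂ : γ.map Prod.snd = μ) (hcγ : Integrable c γ)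
    (hle : ∫ p, c p ∂γ ≤ ∫ x, c (x, x) ∂μ) :
    (∀ᵐ p ∂γ, p.1 = p.2) ∧ ∫ p, c p ∂γ = ∫ x, c (x, x) ∂μ := by
  set G : X × X → ℝ := fun p ↦ c (p.1, p.1) + c (p.2, p.2)
  have hG₁ : Integrable (fun p : X × X ↦ c (p.1, p.1)) γ :=
    (hγ₁ ▸ hc_diag).comp_measurable measurable_fst
  have hG₂ : Integrable (fun p : X × X ↦ c (p.2, p.2)) γ :=
    (hγ₂ ▸ hc_diag).comp_measurable measurable_snd
  have hG_int : ∫ p, G p ∂γ = 2 * ∫ x, c (x, x) ∂μ := by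
    rw [integral_add hG₁ hG₂, two_mul]
    congr 1
    · conv_rhs => rw [← hγ₁]
      exact (integral_map measurable_fst.aemeasurable (hγ₁ ▸ hc_diag.aestronglyMeasurable)).symm
    · conv_rhs => rw [← hγ₂]
      exact (integral_map measurable_snd.aemeasurable (hγ₂ ▸ hc_diag.aestronglyMeasurable)).symm
  have hSS := ae_mem_prod_of_map_fst_of_map_snd hγ₁ hγ₂ hμS
  have hG_le : G ≤ᵐ[γ] fun p ↦ 2 * c p := by
    filter_upwards [hSS] with ⟨x, y⟩ ⟨hx, hy⟩
    rcases eq_or_ne x y with rfl | hxy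
    · exact (two_mul _).ge
    · exact (hc x hx y hy hxy).le
  have hG_eq : ∫ p, G p ∂γ = ∫ p, 2 * c p ∂γ := by
    refine le_antisymm (integral_mono_ae (hG₁.add hG₂) (hcγ.const_mul 2) hG_le) ?_
    rw [hG_int, integral_const_mul]
    linarith
  refine ⟨?_, ?_⟩
  · filter_upwards [hSS, (integral_eq_iff_of_ae_le (hG₁.add hG₂) (hcγ.const_mul 2) hG_le).1 hG_eq]
      with ⟨x, y⟩ ⟨hx, hy⟩ hxy
    by_contra hne
    exact (hc x hx y hy hne).ne hxy
  · rw [integral_const_mul, hG_int] at hG_eq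
    linarith

end MeasureTheory.Measure

theorem stmt9_general (a b : ℝ) (I : Set ℝ)
    (κ : ℝ → ℝ) (hκcont : ContinuousOn κ I) (hκ : StrictConcaveOn ℝ I κ)
    (hsum : ∀ x ∈ Set.Icc a b, ∀ y ∈ Set.Icc a b, x + y ∈ I)
    (f₀ : Measure ℝ) [IsProbabilityMeasure f₀]
    (hsupp : {x : ℝ | ∀ ε > 0, 0 < f₀ (Metric.ball x ε)} = Set.Icc a b)
    (γstar : Measure (ℝ × ℝ))
    (hγ₁ : γstar.map Prod.fst = f₀) (hγ₂ : γstar.map Prod.snd = f₀)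
    (hmin : ∀ γ : Measure (ℝ × ℝ), γ.map Prod.fst = f₀ → γ.map Prod.snd = f₀ →
      ∫ p, κ (p.1 + p.2) ∂γstar ≤ ∫ p, κ (p.1 + p.2) ∂γ) :
    γstar {p : ℝ × ℝ | p.1 ≠ p.2} = 0 ∧
    ∫ p, κ (p.1 + p.2) ∂γstar = ∫ x, κ (2 * x) ∂f₀ := by
  have hf₀ : ∀ᵐ x ∂f₀, x ∈ Icc a b := by
    have hsupp' : f₀.support = Icc a b := by
      rw [← hsupp]
      ext x
      exact Metric.nhds_basis_ball.mem_measureSupport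
    exact hsupp' ▸ f₀.support_mem_ae
  have hκ_cont : ContinuousOn (fun p : ℝ × ℝ ↦ κ (p.1 + p.2)) (Icc a b ×ˢ Icc a b) :=
    hκcont.comp (by fun_prop) fun p hp ↦ hsum _ hp.1 _ hp.2
  have hκ_int {γ : Measure (ℝ × ℝ)} (h₁ : γ.map Prod.fst = f₀) (h₂ : γ.map Prod.snd = f₀) :
      Integrable (fun p : ℝ × ℝ ↦ κ (p.1 + p.2)) γ :=
    Measure.integrable_of_map_fst_of_map_snd h₁ h₂ isCompact_Icc hf₀ hκ_cont
  have hle : ∫ p, κ (p.1 + p.2) ∂γstar ≤ ∫ x, κ (x + x) ∂f₀ := by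
    have hdiag₁ := f₀.map_fst_map_diag
    have hdiag₂ := f₀.map_snd_map_diag
    rw [← Measure.integral_map_diag (hκ_int hdiag₁ hdiag₂).aestronglyMeasurable]
    exact hmin _ hdiag₁ hdiag₂
  obtain ⟨hdiag, hval⟩ := Measure.ae_fst_eq_snd_of_integral_le_integral_diag hf₀
    (fun x hx y hy ↦ hκ.map_add_self_add_lt (hsum x hx x hx) (hsum y hy y hy))
    ((hκ_int f₀.map_fst_map_diag f₀.map_snd_map_diag).comp_measurable (by fun_prop)) hγ₁ hγ₂
    (hκ_int hγ₁ hγ₂) hle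
  exact ⟨ae_iff.1 hdiag, by simp_rw [hval, two_mul]⟩

theorem stmt9 (a b : ℝ) (hab : a ≤ b) (I : Set ℝ)
    (κ : ℝ → ℝ) (hκcont : ContinuousOn κ I) (hκ : StrictConcaveOn ℝ I κ)
    (hsum : ∀ x ∈ Set.Icc a b, ∀ y ∈ Set.Icc a b, x + y ∈ I)
    (f₀ : Measure ℝ) [IsProbabilityMeasure f₀]
    (hsupp : {x : ℝ | ∀ ε > 0, 0 < f₀ (Metric.ball x ε)} = Set.Icc a b)
    (γstar : Measure (ℝ × ℝ))
    (hγ₁ : γstar.map Prod.fst = f₀) (hγ₂ : γstar.map Prod.snd = f₀)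
    (hmin : ∀ γ : Measure (ℝ × ℝ), γ.map Prod.fst = f₀ → γ.map Prod.snd = f₀ →
      ∫ p, κ (p.1 + p.2) ∂γstar ≤ ∫ p, κ (p.1 + p.2) ∂γ) :
    γstar {p : ℝ × ℝ | p.1 ≠ p.2} = 0 ∧
    ∫ p, κ (p.1 + p.2) ∂γstar = ∫ x, κ (2 * x) ∂f₀ :=
  stmt9_general a b I κ hκcont hκ hsum f₀ hsupp γstar hγ₁ hγ₂ hmin
end

section
/- Let κ be a strictly concave real function on an interval I ⊂ ℝ, and let A ⊂ ℝ² be a set such that x + y, x + y', x' + y, x' + y' ∈ I and κ(x + y) + κ(x' + y') ≤ κ(x + y') + κ(x' + y) for all (x, y), (x', y') ∈ A (i.e. A is c-monotone for the cost c(x, y) = κ(x + y)). Then A is monotone: (x' − x)(y' − y) ≥ 0 for all (x, y), (x', y') ∈ A. -/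
open Set

section

variable {𝕜 β : Type*} [Field 𝕜] [LinearOrder 𝕜] [IsStrictOrderedRing 𝕜]
  [AddCommGroup β] [PartialOrder β] [IsOrderedCancelAddMonoid β] [Module 𝕜 β]
  {s : Set 𝕜} {f : 𝕜 → β}

theorem StrictConcaveOn.map_add_map_lt_of_mem_Ioo (hf : StrictConcaveOn 𝕜 s f) {a b c d : 𝕜}
    (ha : a ∈ s) (hd : d ∈ s) (hb : b ∈ Ioo a d) (hbc : b + c = a + d) :
    f a + f d < f b + f c := by
  obtain ⟨hab, hbd⟩ := hb
  have hda : 0 < d - a := by linarith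
  -- `b` and `c` are the convex combinations of `a` and `d` with swapped weights `t` and `1 - t`.
  set t := (d - b) / (d - a)
  have ht₀ : 0 < t := div_pos (by linarith) hda
  have ht₁ : 0 < 1 - t := by
    have : t < 1 := (div_lt_one hda).2 (by linarith)
    linarith
  have hb : t • a + (1 - t) • d = b := by
    simp only [smul_eq_mul, t]
    field_simp
    ring
  have hc : (1 - t) • a + t • d = c := by
    simp only [smul_eq_mul] at hb ⊢
    linear_combination -hbc - hb
  have hb' := hf.2 ha hd (hab.trans hbd).ne ht₀ ht₁ (by ring)
  have hc' := hf.2 ha hd (hab.trans hbd).ne ht₁ ht₀ (by ring)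
  rw [hb] at hb'
  rw [hc] at hc'
  calc f a + f d = (t • f a + (1 - t) • f d) + ((1 - t) • f a + t • f d) := by module
    _ < f b + f c := add_lt_add hb' hc'

theorem StrictConcaveOn.map_add_add_lt (hf : StrictConcaveOn 𝕜 s f) {x x' y y' : 𝕜}
    (hxy : x + y ∈ s) (hxy' : x' + y' ∈ s) (hx : x < x') (hy : y < y') :
    f (x + y) + f (x' + y') < f (x + y') + f (x' + y) :=
  hf.map_add_map_lt_of_mem_Ioo hxy hxy' ⟨by linarith, by linarith⟩ (by ring)

end

theorem stmt10 (I : Set ℝ) (κ : ℝ → ℝ) (hκ : StrictConcaveOn ℝ I κ)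
    (A : Set (ℝ × ℝ))
    (hsumI : ∀ p ∈ A, ∀ q ∈ A,
      p.1 + p.2 ∈ I ∧ p.1 + q.2 ∈ I ∧ q.1 + p.2 ∈ I ∧ q.1 + q.2 ∈ I)
    (hcmono : ∀ p ∈ A, ∀ q ∈ A,
      κ (p.1 + p.2) + κ (q.1 + q.2) ≤ κ (p.1 + q.2) + κ (q.1 + p.2)) :
    ∀ p ∈ A, ∀ q ∈ A, 0 ≤ (q.1 - p.1) * (q.2 - p.2) := by
  intro p hp q hq
  obtain ⟨-, hpq, hqp, -⟩ := hsumI p hp q hq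
  have hc := hcmono p hp q hq
  by_contra! hneg
  rcases mul_neg_iff.1 hneg with ⟨h₁, h₂⟩ | ⟨h₁, h₂⟩
  · have := hκ.map_add_add_lt hpq hqp (sub_pos.1 h₁) (sub_neg.1 h₂)
    linarith
  · have := hκ.map_add_add_lt hqp hpq (sub_neg.1 h₁) (sub_pos.1 h₂)
    linarith
end

section
/- For 0 < θ < π define Λ_θ(η) = sin(θ + 2η)/cos η on [0, (π − θ)/2]. If 0 < θ < π/2, then Λ_θ is strictly monotone increasing on [0, (π/2 − θ)/3] and strictly monotone decreasing on [π/2 − θ, (π − θ)/2], with Λ_θ((π/2 − θ)/3) ≥ 1 and Λ_θ(π/2 − θ) = 1. If π/2 ≤ θ < π, then Λ_θ is strictly monotone decreasing on [0, (π − θ)/2], with Λ_θ(0) = sin θ and Λ_θ((π − θ)/2) = 0. -/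
/-!
Writing `Λ_θ(η) = sin (θ + 2η) / cos η`, the product-to-sum formulas give
`Λ_θ'(η) = (cos (θ + 3η) + 3 cos (θ + η)) / (2 cos² η)`.
On the increasing interval both `θ + η` and `θ + 3η` lie in `[-π/2, π/2]`, on the decreasing
ones both lie in `[π/2, 3π/2]`, so the derivative has a sign there. The value `1` is taken
where `θ + 2η` is `π/2 ± η`, i.e. at `η = (π/2 - θ)/3` and at `η = π/2 - θ`.
-/

open Real Set

local notation "Λ" θ:max => fun η : ℝ => Real.sin (θ + 2 * η) / Real.cos η

lemma cos_add_two_mul_add_three_mul_cos (a x : ℝ) :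
    cos (a + 2 * x) + 3 * cos a = 4 * cos (a + x) * cos x + 2 * sin (a + x) * sin x := by
  rw [cos_add a (2 * x), cos_add, sin_add, cos_two_mul, sin_two_mul]
  linear_combination -2 * cos a * sin_sq_add_cos_sq x

lemma hasDerivAt_sin_add_two_mul_div_cos (θ x : ℝ) (hx : cos x ≠ 0) :
    HasDerivAt (Λ θ) ((cos (θ + 3 * x) + 3 * cos (θ + x)) / 2 / cos x ^ 2) x := by
  have hsin : HasDerivAt (fun η => sin (θ + 2 * η)) (cos (θ + 2 * x) * 2) x := by
    simpa using (((hasDerivAt_id x).const_mul 2).const_add θ).sin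
  refine (hsin.div (hasDerivAt_cos x) hx).congr_deriv ?_
  rw [show θ + 3 * x = (θ + x) + 2 * x by ring, show θ + 2 * x = (θ + x) + x by ring,
    cos_add_two_mul_add_three_mul_cos]
  ring

section Monotonicity

variable {θ a b : ℝ}

lemma continuousOn_sin_add_two_mul_div_cos (ha : 0 ≤ a) (hb : b < π / 2) :
    ContinuousOn (Λ θ) (Icc a b) :=
  (continuous_sin.comp (continuous_const.add (continuous_const.mul continuous_id))).continuousOn.div
    continuous_cos.continuousOn fun x hx =>
      (cos_pos_of_mem_Ioo ⟨by linarith [pi_pos, hx.1], hx.2.trans_lt hb⟩).ne'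

lemma strictMonoOn_sin_add_two_mul_div_cos (ha : 0 ≤ a) (hb : b < π / 2)
    (hθa : -(π / 2) ≤ θ + a) (hθb : θ + 3 * b ≤ π / 2) :
    StrictMonoOn (Λ θ) (Icc a b) := by
  refine strictMonoOn_of_deriv_pos (convex_Icc a b)
    (continuousOn_sin_add_two_mul_div_cos ha hb) fun x hx => ?_
  rw [interior_Icc] at hx
  obtain ⟨hax, hxb⟩ := hx
  have hcos : 0 < cos x := cos_pos_of_mem_Ioo ⟨by linarith [pi_pos], by linarith⟩
  have hcos₁ : 0 < cos (θ + x) := cos_pos_of_mem_Ioo ⟨by linarith, by linarith⟩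
  have hcos₃ : 0 < cos (θ + 3 * x) := cos_pos_of_mem_Ioo ⟨by linarith, by linarith⟩
  rw [(hasDerivAt_sin_add_two_mul_div_cos θ x hcos.ne').deriv]
  positivity

lemma strictAntiOn_sin_add_two_mul_div_cos (ha : 0 ≤ a) (hb : b < π / 2)
    (hθa : π / 2 ≤ θ + a) (hθb : θ + 3 * b ≤ 3 * π / 2) :
    StrictAntiOn (Λ θ) (Icc a b) := by
  refine strictAntiOn_of_deriv_neg (convex_Icc a b)
    (continuousOn_sin_add_two_mul_div_cos ha hb) fun x hx => ?_
  rw [interior_Icc] at hx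
  obtain ⟨hax, hxb⟩ := hx
  have hcos : 0 < cos x := cos_pos_of_mem_Ioo ⟨by linarith [pi_pos], by linarith⟩
  have hcos₁ : cos (θ + x) < 0 := cos_neg_of_pi_div_two_lt_of_lt (by linarith) (by linarith)
  have hcos₃ : cos (θ + 3 * x) < 0 := cos_neg_of_pi_div_two_lt_of_lt (by linarith) (by linarith)
  rw [(hasDerivAt_sin_add_two_mul_div_cos θ x hcos.ne').deriv]
  exact div_neg_of_neg_of_pos (by linarith) (by positivity)

end Monotonicity

lemma sin_add_two_mul_div_cos_of_add_eq {θ η : ℝ} (h : θ + η = π / 2) (hη : cos η ≠ 0) :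
    sin (θ + 2 * η) / cos η = 1 := by
  rw [show θ + 2 * η = η + π / 2 by linarith, sin_add_pi_div_two, div_self hη]

lemma sin_add_two_mul_div_cos_of_add_three_mul_eq {θ η : ℝ} (h : θ + 3 * η = π / 2)
    (hη : cos η ≠ 0) : sin (θ + 2 * η) / cos η = 1 := by
  rw [show θ + 2 * η = π / 2 - η by linarith, sin_pi_div_two_sub, div_self hη]

theorem stmt13_general (θ : ℝ) (hθ0 : 0 < θ) :
    (θ < Real.pi / 2 →
      StrictMonoOn (fun η => Real.sin (θ + 2 * η) / Real.cos η)
        (Set.Icc 0 ((Real.pi / 2 - θ) / 3)) ∧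
      StrictAntiOn (fun η => Real.sin (θ + 2 * η) / Real.cos η)
        (Set.Icc (Real.pi / 2 - θ) ((Real.pi - θ) / 2)) ∧
      1 ≤ Real.sin (θ + 2 * ((Real.pi / 2 - θ) / 3)) / Real.cos ((Real.pi / 2 - θ) / 3) ∧
      Real.sin (θ + 2 * (Real.pi / 2 - θ)) / Real.cos (Real.pi / 2 - θ) = 1) ∧
    (Real.pi / 2 ≤ θ →
      StrictAntiOn (fun η => Real.sin (θ + 2 * η) / Real.cos η)
        (Set.Icc 0 ((Real.pi - θ) / 2)) ∧
      Real.sin (θ + 2 * (0 : ℝ)) / Real.cos (0 : ℝ) = Real.sin θ ∧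
      Real.sin (θ + 2 * ((Real.pi - θ) / 2)) / Real.cos ((Real.pi - θ) / 2) = 0) := by
  have hπ := pi_pos
  refine ⟨fun hθ => ⟨?_, ?_, ?_, ?_⟩, fun hθ => ⟨?_, by simp, ?_⟩⟩
  · exact strictMonoOn_sin_add_two_mul_div_cos le_rfl (by linarith) (by linarith) (by linarith)
  · exact strictAntiOn_sin_add_two_mul_div_cos (by linarith) (by linarith) (by linarith)
      (by linarith)
  · refine (sin_add_two_mul_div_cos_of_add_three_mul_eq (by ring) ?_).ge
    exact (cos_pos_of_mem_Ioo ⟨by linarith, by linarith⟩).ne'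
  · refine sin_add_two_mul_div_cos_of_add_eq (by ring) ?_
    exact (cos_pos_of_mem_Ioo ⟨by linarith, by linarith⟩).ne'
  · exact strictAntiOn_sin_add_two_mul_div_cos le_rfl (by linarith) (by linarith) (by linarith)
  · rw [show θ + 2 * ((π - θ) / 2) = π by ring, sin_pi, zero_div]

theorem stmt13 (θ : ℝ) (hθ0 : 0 < θ) (hθπ : θ < Real.pi) :
    (θ < Real.pi / 2 →
      StrictMonoOn (fun η => Real.sin (θ + 2 * η) / Real.cos η)
        (Set.Icc 0 ((Real.pi / 2 - θ) / 3)) ∧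
      StrictAntiOn (fun η => Real.sin (θ + 2 * η) / Real.cos η)
        (Set.Icc (Real.pi / 2 - θ) ((Real.pi - θ) / 2)) ∧
      1 ≤ Real.sin (θ + 2 * ((Real.pi / 2 - θ) / 3)) / Real.cos ((Real.pi / 2 - θ) / 3) ∧
      Real.sin (θ + 2 * (Real.pi / 2 - θ)) / Real.cos (Real.pi / 2 - θ) = 1) ∧
    (Real.pi / 2 ≤ θ →
      StrictAntiOn (fun η => Real.sin (θ + 2 * η) / Real.cos η)
        (Set.Icc 0 ((Real.pi - θ) / 2)) ∧
      Real.sin (θ + 2 * (0 : ℝ)) / Real.cos (0 : ℝ) = Real.sin θ ∧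
      Real.sin (θ + 2 * ((Real.pi - θ) / 2)) / Real.cos ((Real.pi - θ) / 2) = 0) :=
  stmt13_general θ hθ0
end

section
/- For every a ∈ [0, π/2] one has 1 − cos(a/2) ≤ (1 − 1/√2) sin a, and a(a/2 − sin(a/2)) ≤ (π/2)(π/4 − 1/√2) sin a. -/
/-!
Both inequalities say that a function `g` vanishing at `0` and at `π / 2` is nonnegative on
`[0, π / 2]`: the constants `1 - 1 / √2` and `π / 2 * (π / 4 - 1 / √2)` are exactly the ones for
which `g (π / 2) = 0`. In both cases `g''` is nonpositive on `[0, π]` because the constant is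
nonnegative, so `g` is concave and lies above the chord joining its zero endpoint values.
-/

open Real Set

lemma nonneg_of_concaveOn_Icc {f : ℝ → ℝ} {a b x : ℝ} (hf : ConcaveOn ℝ (Icc a b) f)
    (ha : 0 ≤ f a) (hb : 0 ≤ f b) (hx : x ∈ Icc a b) : 0 ≤ f x := by
  have hab : a ≤ b := hx.1.trans hx.2
  calc 0 ≤ min (f a) (f b) := le_min ha hb
    _ ≤ f x := hf.ge_on_segment (left_mem_Icc.2 hab) (right_mem_Icc.2 hab)
      (by rwa [segment_eq_Icc hab])

lemma concaveOn_of_hasDerivAt2_nonpos {D : Set ℝ} (hD : Convex ℝ D) {f f' f'' : ℝ → ℝ}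
    (hf' : ∀ x, HasDerivAt f (f' x) x) (hf'' : ∀ x, HasDerivAt f' (f'' x) x)
    (hf''₀ : ∀ x ∈ D, f'' x ≤ 0) : ConcaveOn ℝ D f :=
  concaveOn_of_hasDerivWithinAt2_nonpos hD
    (fun x _ => (hf' x).continuousAt.continuousWithinAt)
    (fun x _ => (hf' x).hasDerivWithinAt) (fun x _ => (hf'' x).hasDerivWithinAt)
    (fun x hx => hf''₀ x (interior_subset hx))

lemma hasDerivAt_sin_half (x : ℝ) : HasDerivAt (fun y => sin (y / 2)) (cos (x / 2) / 2) x := by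
  simpa [div_eq_mul_inv] using ((hasDerivAt_id x).div_const 2).sin

lemma hasDerivAt_cos_half (x : ℝ) : HasDerivAt (fun y => cos (y / 2)) (-sin (x / 2) / 2) x := by
  simpa [div_eq_mul_inv] using ((hasDerivAt_id x).div_const 2).cos

lemma concaveOn_mul_sin_add_cos_half_sub_one {c : ℝ} (hc : 0 ≤ c) :
    ConcaveOn ℝ (Icc 0 π) fun x => c * sin x + cos (x / 2) - 1 := by
  refine concaveOn_of_hasDerivAt2_nonpos (convex_Icc 0 π)
    (f' := fun x => c * cos x - sin (x / 2) / 2) (f'' := fun x => -(c * sin x + cos (x / 2) / 4))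
    (fun x => ?_) (fun x => ?_) ?_
  · exact ((((hasDerivAt_sin x).const_mul c).add (hasDerivAt_cos_half x)).sub_const 1).congr_deriv
      (by ring)
  · exact (((hasDerivAt_cos x).const_mul c).sub ((hasDerivAt_sin_half x).div_const 2)).congr_deriv
      (by ring)
  · rintro x ⟨hx₀, hxπ⟩
    have : 0 ≤ sin x := sin_nonneg_of_nonneg_of_le_pi hx₀ hxπ
    have : 0 ≤ cos (x / 2) := cos_nonneg_of_mem_Icc ⟨by linarith [pi_pos], by linarith⟩
    have : 0 ≤ c * sin x := by positivity
    linarith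

lemma concaveOn_mul_sin_sub_mul_half_sub_sin_half {K : ℝ} (hK : 0 ≤ K) :
    ConcaveOn ℝ (Icc 0 π) fun x => K * sin x - x * (x / 2 - sin (x / 2)) := by
  refine concaveOn_of_hasDerivAt2_nonpos (convex_Icc 0 π)
    (f' := fun x => K * cos x - x + sin (x / 2) + x * cos (x / 2) / 2)
    (f'' := fun x => -(K * sin x + (1 - cos (x / 2)) + x * sin (x / 2) / 4))
    (fun x => ?_) (fun x => ?_) ?_
  · exact (((hasDerivAt_sin x).const_mul K).sub ((hasDerivAt_id' x).mul
      (((hasDerivAt_id' x).div_const 2).sub (hasDerivAt_sin_half x)))).congr_deriv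
      (by simp only [Pi.sub_apply]; ring)
  · exact (((((hasDerivAt_cos x).const_mul K).sub (hasDerivAt_id' x)).add
      (hasDerivAt_sin_half x)).add (((hasDerivAt_id' x).mul
      (hasDerivAt_cos_half x)).div_const 2)).congr_deriv (by ring)
  · rintro x ⟨hx₀, hxπ⟩
    have : 0 ≤ K * sin x := mul_nonneg hK (sin_nonneg_of_nonneg_of_le_pi hx₀ hxπ)
    have : 0 ≤ x * sin (x / 2) :=
      mul_nonneg hx₀ (sin_nonneg_of_nonneg_of_le_pi (by linarith) (by linarith [pi_pos]))
    linarith [cos_le_one (x / 2)]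

lemma one_div_sqrt_two_lt_three_div_four : 1 / √2 < 3 / 4 := by
  rw [div_lt_div_iff₀ (by positivity) (by norm_num), one_mul]
  nlinarith [sq_sqrt (zero_le_two : (0 : ℝ) ≤ 2), sqrt_nonneg 2]

theorem one_sub_cos_half_le_mul_sin {a : ℝ} (ha : a ∈ Icc 0 (π / 2)) :
    1 - cos (a / 2) ≤ (1 - 1 / √2) * sin a := by
  have hconcave := concaveOn_mul_sin_add_cos_half_sub_one
    (by linarith [one_div_sqrt_two_lt_three_div_four] : 0 ≤ 1 - 1 / √2)
  have hvanish : (1 - 1 / √2) * sin (π / 2) + cos (π / 2 / 2) - 1 = 0 := by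
    rw [sin_pi_div_two, show π / 2 / 2 = π / 4 by ring, cos_pi_div_four, sqrt_div_self']
    ring
  have := nonneg_of_concaveOn_Icc (hconcave.subset (Icc_subset_Icc_right (by linarith [pi_pos]))
    (convex_Icc _ _)) (by simp) hvanish.ge ha
  linarith

theorem mul_half_sub_sin_half_le_mul_sin {a : ℝ} (ha : a ∈ Icc 0 (π / 2)) :
    a * (a / 2 - sin (a / 2)) ≤ π / 2 * (π / 4 - 1 / √2) * sin a := by
  have hconcave := concaveOn_mul_sin_sub_mul_half_sub_sin_half
    (by nlinarith [one_div_sqrt_two_lt_three_div_four, pi_gt_three] : 0 ≤ π / 2 * (π / 4 - 1 / √2))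
  have hvanish :
      π / 2 * (π / 4 - 1 / √2) * sin (π / 2) - π / 2 * (π / 2 / 2 - sin (π / 2 / 2)) = 0 := by
    rw [sin_pi_div_two, show π / 2 / 2 = π / 4 by ring, sin_pi_div_four, sqrt_div_self']
    ring
  have := nonneg_of_concaveOn_Icc (hconcave.subset (Icc_subset_Icc_right (by linarith [pi_pos]))
    (convex_Icc _ _)) (by simp) hvanish.ge ha
  linarith

theorem stmt15 (a : ℝ) (ha : a ∈ Set.Icc 0 (Real.pi / 2)) :
    1 - Real.cos (a / 2) ≤ (1 - 1 / Real.sqrt 2) * Real.sin a ∧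
    a * (a / 2 - Real.sin (a / 2)) ≤
      Real.pi / 2 * (Real.pi / 4 - 1 / Real.sqrt 2) * Real.sin a :=
  ⟨one_sub_cos_half_le_mul_sin ha, mul_half_sub_sin_half_le_mul_sin ha⟩
end

section
/- Let d ≥ 2 be an integer and a ∈ [0, π/2]. Then ∫_0^{π/2} cos(φ + a/2) · (d − 1) sin^{d−2}φ cos φ dφ = cos(a/2) · b_d/(2 b_{d−1}) − ((d − 1)/d) sin(a/2). -/
open MeasureTheory Real Set intervalIntegral

lemma sinPowI : ∀ n : ℕ, (∫ x in (0:ℝ)..(π/2), Real.sin x ^ n) =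
    Real.sqrt π * Real.Gamma (((n:ℝ)+1)/2) / (2 * Real.Gamma ((n:ℝ)/2+1))
  | 0 => by
    simp only [pow_zero, intervalIntegral.integral_const, smul_eq_mul, mul_one, sub_zero,
      Nat.cast_zero, zero_add, zero_div]
    rw [Real.Gamma_one_half_eq, Real.Gamma_one]
    rw [show √π * √π / (2*1) = √π*√π/2 by ring, mul_self_sqrt pi_pos.le]
  | 1 => by
    rw [show (∫ x in (0:ℝ)..(π/2), Real.sin x ^ 1) = ∫ x in (0:ℝ)..(π/2), Real.sin x by
      simp, integral_sin]
    have h : Real.Gamma ((1:ℝ)/2 + 1) = (1/2) * Real.Gamma (1/2) :=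
      Real.Gamma_add_one (by norm_num)
    norm_num
    rw [show (3:ℝ)/2 = 1/2+1 by norm_num, h, Real.Gamma_one_half_eq,
      eq_div_iff (by positivity)]
    ring
  | (n+2) => by
    rw [integral_sin_pow, sinPowI n]
    have h1 : Real.Gamma ((((n:ℕ):ℝ)+2+1)/2) = (((n:ℝ)+1)/2) * Real.Gamma (((n:ℝ)+1)/2) := by
      rw [show (((n:ℕ):ℝ)+2+1)/2 = ((n:ℝ)+1)/2 + 1 by push_cast; ring,
        Real.Gamma_add_one (by positivity)]
    have h2 : Real.Gamma ((((n:ℕ):ℝ)+2)/2+1) = ((n:ℝ)/2+1) * Real.Gamma ((n:ℝ)/2+1) := by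
      rw [show (((n:ℕ):ℝ)+2)/2+1 = ((n:ℝ)/2+1) + 1 by push_cast; ring,
        Real.Gamma_add_one (by positivity)]
    have g1 : Real.Gamma (((n:ℝ)+1)/2) ≠ 0 := (Real.Gamma_pos_of_pos (by positivity)).ne'
    have g2 : Real.Gamma ((n:ℝ)/2+1) ≠ 0 := (Real.Gamma_pos_of_pos (by positivity)).ne'
    push_cast [h1, h2]
    simp only [Real.sin_zero, Real.cos_pi_div_two, zero_pow (Nat.succ_ne_zero n), mul_zero,
      zero_mul, sub_zero, zero_sub, zero_div, neg_zero, zero_add, mul_zero]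
    field_simp

theorem stmt17 (d : ℕ) (hd : 2 ≤ d) (a : ℝ) (ha : a ∈ Set.Icc 0 (Real.pi / 2)) :
    ∫ φ in (0 : ℝ)..(Real.pi / 2),
        Real.cos (φ + a / 2) * (((d : ℝ) - 1) * Real.sin φ ^ (d - 2) * Real.cos φ) =
      Real.cos (a / 2) * (ballVol d / (2 * ballVol (d - 1))) -
        ((d : ℝ) - 1) / d * Real.sin (a / 2) := by
  obtain ⟨m, rfl⟩ : ∃ m, d = m + 2 := ⟨d - 2, by omega⟩
  have hsub2 : m + 2 - 2 = m := rfl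
  have hsub1 : m + 2 - 1 = m + 1 := rfl
  rw [hsub2, hsub1]
  have hcast : ((m+2:ℕ):ℝ) - 1 = (m:ℝ) + 1 := by push_cast; ring
  rw [hcast]
  have key : ∀ φ : ℝ, Real.cos (φ + a/2) * (((m:ℝ)+1) * Real.sin φ ^ m * Real.cos φ) =
      Real.cos (a/2) * (((m:ℝ)+1) * (Real.sin φ ^ m - Real.sin φ ^ (m+2))) -
      Real.sin (a/2) * (((m:ℝ)+1) * (Real.sin φ ^ (m+1) * Real.cos φ ^ (2*0+1))) := by
    intro φ
    rw [Real.cos_add]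
    linear_combination (((m:ℝ)+1) * Real.sin φ ^ m * Real.cos (a/2)) * Real.sin_sq_add_cos_sq φ
  simp only [key]
  rw [intervalIntegral.integral_sub
      (((by fun_prop : Continuous fun φ : ℝ => Real.cos (a/2) *
        (((m:ℝ)+1) * (Real.sin φ ^ m - Real.sin φ ^ (m+2))))).intervalIntegrable _ _)
      ((by fun_prop : Continuous fun φ : ℝ => Real.sin (a/2) *
        (((m:ℝ)+1) * (Real.sin φ ^ (m+1) * Real.cos φ ^ (2*0+1)))).intervalIntegrable _ _),
    intervalIntegral.integral_const_mul, intervalIntegral.integral_const_mul,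
    intervalIntegral.integral_const_mul, intervalIntegral.integral_const_mul,
    intervalIntegral.integral_sub
      ((by fun_prop : Continuous fun φ : ℝ => Real.sin φ ^ m).intervalIntegrable _ _)
      ((by fun_prop : Continuous fun φ : ℝ => Real.sin φ ^ (m+2)).intervalIntegrable _ _),
    sinPowI m, sinPowI (m+2), integral_sin_pow_mul_cos_pow_odd]
  simp only [Real.sin_zero, Real.sin_pi_div_two, pow_zero, mul_one, integral_pow, one_pow,
    zero_pow (Nat.succ_ne_zero (m+1)), sub_zero]
  -- now pure algebra
  have h1 : Real.Gamma ((((m:ℕ):ℝ)+2+1)/2) = (((m:ℝ)+1)/2) * Real.Gamma (((m:ℝ)+1)/2) := by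
    rw [show (((m:ℕ):ℝ)+2+1)/2 = ((m:ℝ)+1)/2 + 1 by ring, Real.Gamma_add_one (by positivity)]
  have h2 : Real.Gamma ((((m:ℕ):ℝ)+2)/2+1) = ((m:ℝ)/2+1) * Real.Gamma ((m:ℝ)/2+1) := by
    rw [show (((m:ℕ):ℝ)+2)/2+1 = ((m:ℝ)/2+1) + 1 by ring, Real.Gamma_add_one (by positivity)]
  have h3 : Real.Gamma ((((m:ℕ):ℝ)+1)/2+1) = (((m:ℝ)+1)/2) * Real.Gamma (((m:ℝ)+1)/2) := by
    rw [Real.Gamma_add_one (by positivity)]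
  have hp : (π:ℝ) ^ ((((m:ℕ):ℝ)+2)/2) = (π:ℝ) ^ ((((m:ℕ):ℝ)+1)/2) * Real.sqrt π := by
    rw [show (((m:ℕ):ℝ)+2)/2 = (((m:ℕ):ℝ)+1)/2 + (1:ℝ)/2 by ring,
      Real.rpow_add Real.pi_pos, ← Real.sqrt_eq_rpow]
  simp only [ballVol]
  push_cast [h1, h2, h3, hp]
  have g1 : Real.Gamma (((m:ℝ)+1)/2) ≠ 0 := (Real.Gamma_pos_of_pos (by positivity)).ne'
  have g2 : Real.Gamma ((m:ℝ)/2+1) ≠ 0 := (Real.Gamma_pos_of_pos (by positivity)).ne'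
  have gs : Real.sqrt π ≠ 0 := (Real.sqrt_pos.mpr Real.pi_pos).ne'
  have gp : (π:ℝ) ^ ((((m:ℕ):ℝ)+1)/2) ≠ 0 := (Real.rpow_pos_of_pos Real.pi_pos _).ne'
  field_simp
  ring
end
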